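/- (Lagrange interpolation) Let Ω ⊆ 𝔽ⁿ be a finitely generated P-closed set with finite P-basis B = {b₁,…,b_M}. For every choice of values a₁, a₂, …, a_M ∈ 𝔽 there exists a skew polynomial F ∈ R with deg(F) < M and F(bᵢ) = aᵢ for all i = 1, …, M. -/

import Mathlib

/- Common setup: free multivariate skew polynomial rings over a division ring. -/

open Matrix Finsupp

/-- The underlying left `𝔽`-module of the free multivariate skew polynomial ring:
the free left `𝔽`-module with basis the free monoid on `n` symbols. -/
abbrev SkewPoly (𝔽 : Type*) [DivisionRing 𝔽] (n : ℕ) : Type _ := FreeMonoid (Fin n) →₀ 𝔽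

namespace SkewPoly

variable {𝔽 : Type*} [DivisionRing 𝔽] {n : ℕ}

/-- The variable `xᵢ` as a skew polynomial. -/
noncomputable def X (𝔽 : Type*) [DivisionRing 𝔽] {n : ℕ} (i : Fin n) : SkewPoly 𝔽 n :=
  Finsupp.single (FreeMonoid.of i) 1

/-- The constant `a` as a skew polynomial (coefficient on the empty word). -/
noncomputable def C {𝔽 : Type*} [DivisionRing 𝔽] (n : ℕ) (a : 𝔽) :
    SkewPoly 𝔽 n := Finsupp.single 1 a

/-- The degree of a skew polynomial: the maximal length of a word in its support
(`⊥` for the zero polynomial). -/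
noncomputable def deg (F : SkewPoly 𝔽 n) : WithBot ℕ :=
  F.support.sup fun m => ((FreeMonoid.length m : ℕ) : WithBot ℕ)

/-- A matrix morphism `σ : 𝔽 → Mₙ(𝔽)`: a unital ring homomorphism. -/
def IsMatrixMorphism (σ : 𝔽 → Matrix (Fin n) (Fin n) 𝔽) : Prop :=
  σ 1 = 1 ∧ (∀ a b : 𝔽, σ (a + b) = σ a + σ b) ∧ (∀ a b : 𝔽, σ (a * b) = σ a * σ b)

/-- A `σ`-vector derivation `δ : 𝔽 → 𝔽ⁿ`: additive with `δ(ab) = σ(a)δ(b) + δ(a)b`. -/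
def IsVectorDerivation (σ : 𝔽 → Matrix (Fin n) (Fin n) 𝔽) (δ : 𝔽 → Fin n → 𝔽) : Prop :=
  (∀ a b : 𝔽, δ (a + b) = δ a + δ b) ∧
    (∀ a b : 𝔽, δ (a * b) = σ a *ᵥ δ b + fun i => δ a i * b)

/-- A multiplication on the free module `SkewPoly 𝔽 n` making it a ring (with the
existing addition) whose identity is the empty word, which restricts to concatenation
on monomials, is additive on degrees of nonzero elements, and for which left
multiplication by constants is scalar multiplication. -/
structure RawMul (𝔽 : Type*) [DivisionRing 𝔽] (n : ℕ) where
  /-- the multiplication -/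
  mul : SkewPoly 𝔽 n → SkewPoly 𝔽 n → SkewPoly 𝔽 n
  mul_add : ∀ F G H : SkewPoly 𝔽 n, mul F (G + H) = mul F G + mul F H
  add_mul : ∀ F G H : SkewPoly 𝔽 n, mul (F + G) H = mul F H + mul G H
  mul_assoc : ∀ F G H : SkewPoly 𝔽 n, mul (mul F G) H = mul F (mul G H)
  one_mul : ∀ F : SkewPoly 𝔽 n, mul (C n 1) F = F
  mul_one : ∀ F : SkewPoly 𝔽 n, mul F (C n 1) = F
  mono_mul_mono : ∀ m m' : FreeMonoid (Fin n),
    mul (Finsupp.single m 1) (Finsupp.single m' 1) = Finsupp.single (m * m') 1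
  const_mul : ∀ (a : 𝔽) (F : SkewPoly 𝔽 n), mul (C n a) F = a • F
  deg_mul : ∀ F G : SkewPoly 𝔽 n, F ≠ 0 → G ≠ 0 → deg (mul F G) = deg F + deg G

/-- The multiplication `S` satisfies the commutation rule
`xᵢ a = Σⱼ σ_{i,j}(a) xⱼ + δᵢ(a)`. -/
def HasCommRule (S : RawMul 𝔽 n) (σ : 𝔽 → Matrix (Fin n) (Fin n) 𝔽)
    (δ : 𝔽 → Fin n → 𝔽) : Prop :=
  ∀ (i : Fin n) (a : 𝔽),
    S.mul (X 𝔽 i) (C n a) =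
      (∑ j : Fin n, Finsupp.single (FreeMonoid.of j) (σ a i j)) + C n (δ a i)

/-- `F = Σᵢ Gᵢ (xᵢ - aᵢ) + b`, i.e. `b` is a remainder of `F` upon right division
by `x₁ - a₁, …, xₙ - aₙ`; equivalently `F - b` lies in the left ideal generated by
the `xᵢ - aᵢ`. -/
def Decomposes (S : RawMul 𝔽 n) (a : Fin n → 𝔽) (F : SkewPoly 𝔽 n) (b : 𝔽) : Prop :=
  ∃ G : Fin n → SkewPoly 𝔽 n,
    F = (∑ i : Fin n, S.mul (G i) (X 𝔽 i - C n (a i))) + C n b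

/-- The evaluation of `F` at the point `a`: the unique `b ∈ 𝔽` such that `F - b`
lies in the left ideal generated by `x₁ - a₁, …, xₙ - aₙ`. -/
noncomputable def eval (S : RawMul 𝔽 n) (a : Fin n → 𝔽) (F : SkewPoly 𝔽 n) : 𝔽 :=
  letI := Classical.propDecidable (∃ b : 𝔽, Decomposes S a F b)
  if h : ∃ b : 𝔽, Decomposes S a F b then h.choose else 0

/-- The `(σ,δ)`-conjugate `a^c = σ(c) a c⁻¹ + δ(c) c⁻¹` of `a` with respect to `c`. -/
noncomputable def conj (σ : 𝔽 → Matrix (Fin n) (Fin n) 𝔽) (δ : 𝔽 → Fin n → 𝔽)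
    (a : Fin n → 𝔽) (c : 𝔽) : Fin n → 𝔽 :=
  fun i => (σ c *ᵥ a) i * c⁻¹ + δ c i * c⁻¹

/-- `I(Ω)`: the set of skew polynomials vanishing at every point of `Ω`. -/
def zeroIdeal (S : RawMul 𝔽 n) (Ω : Set (Fin n → 𝔽)) : Set (SkewPoly 𝔽 n) :=
  {F | ∀ a ∈ Ω, eval S a F = 0}

/-- The left ideal of `SkewPoly 𝔽 n` generated by `x₁ - a₁, …, xₙ - aₙ`
(the set of sums of left multiples of the generators). -/
def pointIdeal (S : RawMul 𝔽 n) (a : Fin n → 𝔽) : Set (SkewPoly 𝔽 n) :=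
  {F | ∃ G : Fin n → SkewPoly 𝔽 n, F = ∑ i : Fin n, S.mul (G i) (X 𝔽 i - C n (a i))}

/-- The P-closure `Ω̄ = Z(I(Ω))` of a set of points `Ω`. -/
def pClosure (S : RawMul 𝔽 n) (Ω : Set (Fin n → 𝔽)) : Set (Fin n → 𝔽) :=
  {a | ∀ F ∈ zeroIdeal S Ω, eval S a F = 0}

/-- `Ω` is P-closed if it equals its P-closure. -/
def IsPClosed (S : RawMul 𝔽 n) (Ω : Set (Fin n → 𝔽)) : Prop := pClosure S Ω = Ω

/-- `B` is P-independent: no point of `B` lies in the P-closure of the rest. -/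
def PIndep (S : RawMul 𝔽 n) (B : Set (Fin n → 𝔽)) : Prop :=
  ∀ a ∈ B, a ∉ pClosure S (B \ {a})

/-- `B` is a P-basis of `Ω`: a P-independent subset of `Ω` whose P-closure is `Ω`. -/
def IsPBasis (S : RawMul 𝔽 n) (B Ω : Set (Fin n → 𝔽)) : Prop :=
  B ⊆ Ω ∧ PIndep S B ∧ pClosure S B = Ω

/-- `Ω` is finitely generated: it is the P-closure of a finite subset of itself. -/
def FinGen (S : RawMul 𝔽 n) (Ω : Set (Fin n → 𝔽)) : Prop :=
  ∃ G : Set (Fin n → 𝔽), G.Finite ∧ G ⊆ Ω ∧ pClosure S G = Ω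

/-- The rank of a P-closed set: the (common) cardinality of its P-bases. -/
noncomputable def pRank (S : RawMul 𝔽 n) (Ω : Set (Fin n → 𝔽)) : ℕ :=
  sInf {k : ℕ | ∃ B : Finset (Fin n → 𝔽), IsPBasis S ↑B Ω ∧ B.card = k}

/-- The image of the evaluation map `E_Ω : R → 𝔽^Ω`, as a left `𝔽`-subspace of `𝔽^Ω`
(the span of the image; the image is itself a subspace since evaluation is left linear). -/
noncomputable def evalSpan (S : RawMul 𝔽 n) (Ω : Set (Fin n → 𝔽)) :
    Submodule 𝔽 (↥Ω → 𝔽) :=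
  Submodule.span 𝔽 (Set.range fun F : SkewPoly 𝔽 n => fun a : ↥Ω => eval S ↑a F)

/-- `I` is a two-sided ideal with respect to the multiplication `S`. -/
def IsTwoSidedIdealSet (S : RawMul 𝔽 n) (I : Set (SkewPoly 𝔽 n)) : Prop :=
  (0 : SkewPoly 𝔽 n) ∈ I ∧ (∀ F ∈ I, ∀ G ∈ I, F + G ∈ I) ∧ (∀ F ∈ I, -F ∈ I) ∧
    (∀ F ∈ I, ∀ G : SkewPoly 𝔽 n, S.mul G F ∈ I) ∧
    (∀ F ∈ I, ∀ G : SkewPoly 𝔽 n, S.mul F G ∈ I)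


/-- The left row-rank of the skew Vandermonde matrix `V_d(G)`: the dimension of the
left `𝔽`-span of its rows `(N_m(c))_{c ∈ G}`, indexed by the words `m` of length `< d`,
where `N_m(c)` is the evaluation of the monomial `m` at the point `c`. -/
noncomputable def vandermondeRank (S : RawMul 𝔽 n) (G : Finset (Fin n → 𝔽)) (d : ℕ) :
    Cardinal :=
  Module.rank 𝔽 ↥(Submodule.span 𝔽 (Set.range
    fun m : {m : FreeMonoid (Fin n) // FreeMonoid.length m < d} =>
      fun c : ↥G => eval S ↑c (Finsupp.single (m : FreeMonoid (Fin n)) (1 : 𝔽))))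

end SkewPoly

open SkewPoly

/-!
Evaluation at a point `a` is the left `𝔽`-linear functional sending a word `m` to the value
`N_m(a)` obtained by reading `m` from right to left, starting from `1` and applying
`c ↦ (σ(c) a + δ(c))ᵢ` for each letter `xᵢ`. Let `W_d ⊆ 𝔽^M` be the set of value vectors
`(F(b₁), …, F(b_M))` of polynomials of degree `< d`. Since the values of `xⱼ F` are determined
by those of `F`, once `W_{d+1} = W_d` the chain `W_d ⊆ W_{d+1} ⊆ ⋯` is constant. P-independence makes every unit vector a value vector,
so the chain reaches `𝔽^M`; as it grows strictly before stabilizing, it does so by `d = M`.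
-/

theorem Monotone.le_of_succ_le_of_stable {α : Type*} [Preorder α] {W : ℕ → α}
    (hmono : Monotone W)
    (hstable : ∀ d, W (d + 1) ≤ W d → W (d + 2) ≤ W (d + 1)) {d : ℕ}
    (hd : W (d + 1) ≤ W d) (e : ℕ) : W e ≤ W d := by
  have hafter : ∀ e, d ≤ e → W e ≤ W d ∧ W (e + 1) ≤ W e := by
    intro e hde
    induction e, hde using Nat.le_induction with
    | base => exact ⟨le_rfl, hd⟩
    | succ e _ ih => exact ⟨ih.2.trans ih.1, hstable e ih.2⟩
  rcases le_or_gt e d with hed | hde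
  · exact hmono hed
  · exact (hafter e hde.le).1

theorem Submodule.le_finrank_of_forall_lt_succ {K V : Type*} [DivisionRing K] [AddCommGroup V]
    [Module K V] [FiniteDimensional K V] {W : ℕ → Submodule K V} {d : ℕ}
    (hlt : ∀ k < d, W k < W (k + 1)) : d ≤ Module.finrank K (W d) := by
  induction d with
  | zero => exact Nat.zero_le _
  | succ d ih =>
    have := Submodule.finrank_lt_finrank_of_lt (hlt d d.lt_succ_self)
    have := ih fun k hk => hlt k (hk.trans d.lt_succ_self)
    omega

theorem Submodule.eq_top_of_stable {K V : Type*} [DivisionRing K] [AddCommGroup V]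
    [Module K V] [FiniteDimensional K V] {W : ℕ → Submodule K V} (hmono : Monotone W)
    (hstable : ∀ d, W (d + 1) ≤ W d → W (d + 2) ≤ W (d + 1)) (htop : ∃ D, W D = ⊤) :
    W (Module.finrank K V) = ⊤ := by
  by_cases hflat : ∃ d < Module.finrank K V, W (d + 1) ≤ W d
  · obtain ⟨d, hd, hle⟩ := hflat
    obtain ⟨D, hD⟩ := htop
    exact eq_top_iff.2 <| hD ▸ (hmono.le_of_succ_le_of_stable hstable hle D).trans (hmono hd.le)
  · push Not at hflat
    have := le_finrank_of_forall_lt_succ fun k hk =>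
      lt_of_le_not_ge (hmono k.le_succ) (hflat k hk)
    exact Submodule.eq_top_of_finrank_eq (le_antisymm (Submodule.finrank_le _) this)

namespace SkewPoly

variable {𝔽 : Type*} [DivisionRing 𝔽] {n : ℕ}

namespace RawMul

variable (S : RawMul 𝔽 n)

noncomputable def mulLeft (F : SkewPoly 𝔽 n) : SkewPoly 𝔽 n →+ SkewPoly 𝔽 n :=
  AddMonoidHom.mk' (S.mul F) (S.mul_add F)

noncomputable def mulRight (G : SkewPoly 𝔽 n) : SkewPoly 𝔽 n →+ SkewPoly 𝔽 n :=
  AddMonoidHom.mk' (S.mul · G) (S.add_mul · · G)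

theorem mul_zero (F : SkewPoly 𝔽 n) : S.mul F 0 = 0 := (S.mulLeft F).map_zero

theorem zero_mul (F : SkewPoly 𝔽 n) : S.mul 0 F = 0 := (S.mulRight F).map_zero

theorem mul_sub (F G H : SkewPoly 𝔽 n) : S.mul F (G - H) = S.mul F G - S.mul F H :=
  (S.mulLeft F).map_sub G H

theorem mul_sum {ι : Type*} (F : SkewPoly 𝔽 n) (s : Finset ι) (G : ι → SkewPoly 𝔽 n) :
    S.mul F (∑ i ∈ s, G i) = ∑ i ∈ s, S.mul F (G i) :=
  map_sum (S.mulLeft F) G s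

theorem sum_mul {ι : Type*} (s : Finset ι) (G : ι → SkewPoly 𝔽 n) (F : SkewPoly 𝔽 n) :
    S.mul (∑ i ∈ s, G i) F = ∑ i ∈ s, S.mul (G i) F :=
  map_sum (S.mulRight F) G s

theorem smul_mul (c : 𝔽) (F G : SkewPoly 𝔽 n) : S.mul (c • F) G = c • S.mul F G := by
  rw [← S.const_mul, S.mul_assoc, S.const_mul]

theorem single_mul (m : FreeMonoid (Fin n)) (c : 𝔽) (F : SkewPoly 𝔽 n) :
    S.mul (Finsupp.single m c) F = c • S.mul (Finsupp.single m 1) F := by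
  rw [← Finsupp.smul_single_one, S.smul_mul]

end RawMul

theorem C_add (x y : 𝔽) : C n (x + y) = C n x + C n y := Finsupp.single_add _ _ _

theorem IsMatrixMorphism.map_zero {σ : 𝔽 → Matrix (Fin n) (Fin n) 𝔽}
    (hσ : IsMatrixMorphism σ) : σ 0 = 0 :=
  (AddMonoidHom.mk' σ hσ.2.1).map_zero

theorem IsVectorDerivation.map_zero {σ : 𝔽 → Matrix (Fin n) (Fin n) 𝔽} {δ : 𝔽 → Fin n → 𝔽}
    (hδ : IsVectorDerivation σ δ) : δ 0 = 0 :=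
  (AddMonoidHom.mk' δ hδ.1).map_zero

theorem IsVectorDerivation.map_one {σ : 𝔽 → Matrix (Fin n) (Fin n) 𝔽} {δ : 𝔽 → Fin n → 𝔽}
    (hσ : IsMatrixMorphism σ) (hδ : IsVectorDerivation σ δ) : δ 1 = 0 := by
  have h := hδ.2 1 1
  simp only [mul_one, hσ.1, Matrix.one_mulVec] at h
  exact add_eq_left.mp h.symm

variable (σ : 𝔽 → Matrix (Fin n) (Fin n) 𝔽) (δ : 𝔽 → Fin n → 𝔽)

/-- The value at `a` of the polynomial `m c` (word `m` times constant `c`); for `c = 1` these are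
the fundamental functions `N_m(a)` of the theory. -/
noncomputable def wordEval (a : Fin n → 𝔽) (c : 𝔽) (m : FreeMonoid (Fin n)) : 𝔽 :=
  m.toList.foldr (fun i e => (σ e *ᵥ a) i + δ e i) c

theorem wordEval_one (a : Fin n → 𝔽) (c : 𝔽) : wordEval σ δ a c 1 = c := rfl

theorem wordEval_of_mul (a : Fin n → 𝔽) (c : 𝔽) (i : Fin n) (m : FreeMonoid (Fin n)) :
    wordEval σ δ a c (FreeMonoid.of i * m) =
      (σ (wordEval σ δ a c m) *ᵥ a) i + δ (wordEval σ δ a c m) i := rfl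

theorem wordEval_mul_of (a : Fin n → 𝔽) (c : 𝔽) (i : Fin n) (m : FreeMonoid (Fin n)) :
    wordEval σ δ a c (m * FreeMonoid.of i) = wordEval σ δ a ((σ c *ᵥ a) i + δ c i) m := by
  simp only [wordEval, FreeMonoid.toList_mul, FreeMonoid.toList_of, List.foldr_append,
    List.foldr_cons, List.foldr_nil]

noncomputable def linEval (a : Fin n → 𝔽) : SkewPoly 𝔽 n →ₗ[𝔽] 𝔽 :=
  Finsupp.linearCombination 𝔽 (wordEval σ δ a 1)

theorem linEval_single (a : Fin n → 𝔽) (m : FreeMonoid (Fin n)) (c : 𝔽) :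
    linEval σ δ a (Finsupp.single m c) = c * wordEval σ δ a 1 m :=
  Finsupp.linearCombination_single _ _ _

theorem linEval_C (a : Fin n → 𝔽) (c : 𝔽) : linEval σ δ a (C n c) = c := by
  rw [C, linEval_single, wordEval_one, mul_one]

variable {σ δ} {S : RawMul 𝔽 n}

theorem X_mul_single (hS : HasCommRule S σ δ) (j : Fin n) (m : FreeMonoid (Fin n)) (c : 𝔽) :
    S.mul (X 𝔽 j) (Finsupp.single m c) =
      (∑ k, Finsupp.single (FreeMonoid.of k * m) (σ c j k)) + Finsupp.single m (δ c j) := by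
  rw [← Finsupp.smul_single_one, ← S.const_mul, ← S.mul_assoc, hS j c, S.add_mul, S.sum_mul,
    S.const_mul, Finsupp.smul_single_one]
  simp_rw [S.single_mul _ (σ c j _), S.mono_mul_mono, Finsupp.smul_single_one]

theorem X_mul_C (hS : HasCommRule S σ δ) (a : Fin n → 𝔽) (j : Fin n) (c : 𝔽) :
    S.mul (X 𝔽 j) (C n c) =
      (∑ k, σ c j k • (X 𝔽 k - C n (a k))) + C n ((σ c *ᵥ a) j + δ c j) := by
  have hC : C n ((σ c *ᵥ a) j) = ∑ k, σ c j k • C n (a k) := by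
    simp only [C, Finsupp.smul_single, smul_eq_mul, ← Finsupp.single_finsetSum, Matrix.mulVec,
      dotProduct]
  simp only [hS j c, C_add, hC, smul_sub, ← add_assoc, Finset.sum_sub_distrib, sub_add_cancel]
  simp only [X, Finsupp.smul_single, smul_eq_mul, mul_one]

variable (S) in
def pointIdealSubmodule (a : Fin n → 𝔽) : Submodule 𝔽 (SkewPoly 𝔽 n) where
  carrier := pointIdeal S a
  add_mem' := by
    rintro _ _ ⟨G, rfl⟩ ⟨G', rfl⟩
    exact ⟨G + G', by simp only [Pi.add_apply, S.add_mul, Finset.sum_add_distrib]⟩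
  zero_mem' := ⟨0, by simp only [Pi.zero_apply, S.zero_mul, Finset.sum_const_zero]⟩
  smul_mem' := by
    rintro c _ ⟨G, rfl⟩
    exact ⟨c • G, by simp only [Pi.smul_apply, S.smul_mul, Finset.smul_sum]⟩

theorem mul_mem_pointIdeal {a : Fin n → 𝔽} (H : SkewPoly 𝔽 n) {F : SkewPoly 𝔽 n}
    (hF : F ∈ pointIdeal S a) : S.mul H F ∈ pointIdeal S a := by
  obtain ⟨G, rfl⟩ := hF
  exact ⟨fun i => S.mul H (G i), by simp only [S.mul_sum, S.mul_assoc]⟩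

theorem X_sub_C_mem_pointIdeal (a : Fin n → 𝔽) (j : Fin n) :
    X 𝔽 j - C n (a j) ∈ pointIdeal S a := by
  classical
  refine ⟨Pi.single j (C n 1), ?_⟩
  rw [Finset.sum_eq_single j (fun i _ hi => by rw [Pi.single_eq_of_ne hi, S.zero_mul])
    (by simp), Pi.single_eq_same, S.one_mul]

theorem single_sub_C_wordEval_mem_pointIdeal (hS : HasCommRule S σ δ) (a : Fin n → 𝔽)
    (m : FreeMonoid (Fin n)) :
    Finsupp.single m 1 - C n (wordEval σ δ a 1 m) ∈ pointIdeal S a := by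
  induction m using FreeMonoid.inductionOn' with
  | one => rw [wordEval_one, ← C, sub_self]; exact (pointIdealSubmodule S a).zero_mem
  | of_mul j m ih =>
    set N := wordEval σ δ a 1 m
    have hsplit : Finsupp.single (FreeMonoid.of j * m) 1 - C n ((σ N *ᵥ a) j + δ N j) =
        S.mul (X 𝔽 j) (Finsupp.single m 1 - C n N) + ∑ k, σ N j k • (X 𝔽 k - C n (a k)) := by
      rw [S.mul_sub, X_mul_C hS a, X, S.mono_mul_mono]
      abel
    rw [wordEval_of_mul, hsplit]
    exact (pointIdealSubmodule S a).add_mem (mul_mem_pointIdeal _ ih)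
      ((pointIdealSubmodule S a).sum_mem fun k _ =>
        (pointIdealSubmodule S a).smul_mem _ (X_sub_C_mem_pointIdeal a k))

theorem sub_C_linEval_mem_pointIdeal (hS : HasCommRule S σ δ) (a : Fin n → 𝔽)
    (F : SkewPoly 𝔽 n) : F - C n (linEval σ δ a F) ∈ pointIdeal S a := by
  induction F using Finsupp.induction_linear with
  | zero =>
    rw [map_zero, C, Finsupp.single_zero, sub_zero]
    exact (pointIdealSubmodule S a).zero_mem
  | add f g hf hg =>
    rw [map_add, C_add, add_sub_add_comm]
    exact (pointIdealSubmodule S a).add_mem hf hg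
  | single m c =>
    rw [linEval_single, C, ← smul_eq_mul, ← Finsupp.smul_single, ← C,
      ← Finsupp.smul_single_one, ← smul_sub]
    exact (pointIdealSubmodule S a).smul_mem c (single_sub_C_wordEval_mem_pointIdeal hS a m)

variable (𝔽 n) in
def degreeLT (d : ℕ) : Submodule 𝔽 (SkewPoly 𝔽 n) :=
  Finsupp.supported 𝔽 𝔽 {m | m.length < d}

theorem mem_degreeLT {d : ℕ} {F : SkewPoly 𝔽 n} : F ∈ degreeLT 𝔽 n d ↔ deg F < d := by
  rw [degreeLT, Finsupp.mem_supported, deg, Finset.sup_lt_iff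
    (show (⊥ : WithBot ℕ) < d from WithBot.bot_lt_coe d)]
  simp [Set.subset_def]

theorem exists_mem_degreeLT (F : SkewPoly 𝔽 n) : ∃ d, F ∈ degreeLT 𝔽 n d :=
  ⟨F.support.sup FreeMonoid.length + 1, (Finsupp.mem_supported _ _).2 fun _ hm =>
    Nat.lt_succ_of_le (Finset.le_sup hm)⟩

theorem deg_X (j : Fin n) : deg (X 𝔽 j) = 1 := by
  simp [deg, X]

theorem X_mul_mem_degreeLT {d : ℕ} (j : Fin n) {F : SkewPoly 𝔽 n} (hF : F ∈ degreeLT 𝔽 n d) :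
    S.mul (X 𝔽 j) F ∈ degreeLT 𝔽 n (d + 1) := by
  rcases eq_or_ne F 0 with rfl | hF0
  · rw [S.mul_zero]
    exact zero_mem _
  rw [mem_degreeLT] at hF ⊢
  have hX : X 𝔽 j ≠ 0 := Finsupp.single_ne_zero.2 one_ne_zero
  rw [S.deg_mul _ _ hX hF0, deg_X, add_comm, Nat.cast_succ]
  exact WithBot.add_lt_add_right WithBot.one_ne_bot hF

variable (σ δ) in
noncomputable def evalImage {ι : Type*} (b : ι → Fin n → 𝔽) (d : ℕ) : Submodule 𝔽 (ι → 𝔽) :=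
  (degreeLT 𝔽 n d).map (LinearMap.pi fun i => linEval σ δ (b i))

theorem evalImage_mono {ι : Type*} (b : ι → Fin n → 𝔽) : Monotone (evalImage σ δ b) :=
  fun _ _ hde => Submodule.map_mono (Finsupp.supported_mono fun _ hm => lt_of_lt_of_le hm hde)

variable (hσ : IsMatrixMorphism σ) (hδ : IsVectorDerivation σ δ) (hS : HasCommRule S σ δ)
include hσ hδ hS

theorem linEval_X_mul (a : Fin n → 𝔽) (j : Fin n) (H : SkewPoly 𝔽 n) :
    linEval σ δ a (S.mul (X 𝔽 j) H) =
      (σ (linEval σ δ a H) *ᵥ a) j + δ (linEval σ δ a H) j := by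
  induction H using Finsupp.induction_linear with
  | zero => simp [S.mul_zero, hσ.map_zero, hδ.map_zero]
  | add f g hf hg =>
    rw [S.mul_add, map_add, map_add, hf, hg, hσ.2.1, hδ.1, Matrix.add_mulVec]
    simp only [Pi.add_apply]
    abel
  | single m c =>
    rw [X_mul_single hS, map_add, map_sum]
    simp only [linEval_single, wordEval_of_mul]
    rw [hσ.2.2, ← Matrix.mulVec_mulVec, hδ.2]
    simp only [Matrix.mulVec, dotProduct, Pi.add_apply, mul_add, Finset.sum_add_distrib]
    abel

theorem linEval_single_mul_C (a : Fin n → 𝔽) (m : FreeMonoid (Fin n)) (c : 𝔽) :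
    linEval σ δ a (S.mul (Finsupp.single m 1) (C n c)) = wordEval σ δ a c m := by
  induction m using FreeMonoid.inductionOn' with
  | one => rw [← C, S.one_mul, linEval_C, wordEval_one]
  | of_mul j m ih =>
    rw [← S.mono_mul_mono, ← X, S.mul_assoc, linEval_X_mul hσ hδ hS, ih, wordEval_of_mul]

theorem linEval_mul_X_sub_C (a : Fin n → 𝔽) (G : SkewPoly 𝔽 n) (i : Fin n) :
    linEval σ δ a (S.mul G (X 𝔽 i - C n (a i))) = 0 := by
  induction G using Finsupp.induction_linear with
  | zero => rw [S.zero_mul, map_zero]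
  | add f g hf hg => rw [S.add_mul, map_add, hf, hg, add_zero]
  | single m c =>
    rw [S.single_mul, S.mul_sub, X, S.mono_mul_mono, map_smul, map_sub, linEval_single,
      linEval_single_mul_C hσ hδ hS, wordEval_mul_of, hσ.1, Matrix.one_mulVec,
      hδ.map_one hσ]
    simp

theorem linEval_eq_zero_of_mem_pointIdeal {a : Fin n → 𝔽} {F : SkewPoly 𝔽 n}
    (hF : F ∈ pointIdeal S a) : linEval σ δ a F = 0 := by
  obtain ⟨G, rfl⟩ := hF
  simp only [map_sum, linEval_mul_X_sub_C hσ hδ hS, Finset.sum_const_zero]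

theorem eval_eq_linEval (a : Fin n → 𝔽) (F : SkewPoly 𝔽 n) : eval S a F = linEval σ δ a F := by
  have hex : Decomposes S a F (linEval σ δ a F) := by
    obtain ⟨G, hG⟩ := sub_C_linEval_mem_pointIdeal hS a F
    exact ⟨G, by rw [← hG, sub_add_cancel]⟩
  have hunique : ∀ c, Decomposes S a F c → c = linEval σ δ a F := by
    rintro c ⟨G, rfl⟩
    rw [map_add, linEval_C, linEval_eq_zero_of_mem_pointIdeal hσ hδ hS ⟨G, rfl⟩, zero_add]
  rw [eval, dif_pos ⟨_, hex⟩]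
  exact hunique _ (Exists.choose_spec _)

theorem evalImage_succ_succ_le {ι : Type*} (b : ι → Fin n → 𝔽) {d : ℕ}
    (hd : evalImage σ δ b (d + 1) ≤ evalImage σ δ b d) :
    evalImage σ δ b (d + 2) ≤ evalImage σ δ b (d + 1) := by
  rw [evalImage, degreeLT, Finsupp.supported_eq_span_single, Submodule.map_span,
    Submodule.span_le]
  rintro _ ⟨_, ⟨m, hm, rfl⟩, rfl⟩
  by_cases hshort : m.length < d + 1
  · exact ⟨_, Finsupp.single_mem_supported 𝔽 _ hshort, rfl⟩
  cases m using FreeMonoid.casesOn with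
  | one => exact absurd (Nat.zero_lt_succ d) hshort
  | of_mul j m =>
    have hm : m.length < d + 1 := by
      change (FreeMonoid.of j * m).length < d + 2 at hm
      rw [FreeMonoid.length_mul, FreeMonoid.length_of] at hm
      omega
    obtain ⟨F, hF, hFm⟩ := hd ⟨_, Finsupp.single_mem_supported 𝔽 (1 : 𝔽) hm, rfl⟩
    refine ⟨S.mul (X 𝔽 j) F, X_mul_mem_degreeLT j hF, funext fun i => ?_⟩
    have hFmi := congrFun hFm i
    simp only [LinearMap.pi_apply] at hFmi ⊢
    rw [← S.mono_mul_mono, ← X, linEval_X_mul hσ hδ hS, linEval_X_mul hσ hδ hS, hFmi]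

theorem exists_evalImage_eq_top {ι : Type*} [Fintype ι] [DecidableEq ι] {b : ι → Fin n → 𝔽}
    (hb : Function.Injective b) (hB : PIndep S (Set.range b)) :
    ∃ D, evalImage σ δ b D = ⊤ := by
  have hsingle : ∀ i, ∃ D, Pi.single i 1 ∈ evalImage σ δ b D := by
    intro i
    obtain ⟨F, hFvan, hFi⟩ : ∃ F ∈ zeroIdeal S (Set.range b \ {b i}), eval S (b i) F ≠ 0 := by
      simpa [pClosure] using hB (b i) ⟨i, rfl⟩
    obtain ⟨D, hD⟩ := exists_mem_degreeLT F
    refine ⟨D, _, (degreeLT 𝔽 n D).smul_mem (eval S (b i) F)⁻¹ hD, funext fun k => ?_⟩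
    simp only [LinearMap.pi_apply, map_smul, smul_eq_mul]
    rw [← eval_eq_linEval hσ hδ hS]
    rcases eq_or_ne k i with rfl | hki
    · rw [Pi.single_eq_same, inv_mul_cancel₀ hFi]
    · rw [Pi.single_eq_of_ne hki, hFvan (b k) ⟨⟨k, rfl⟩, hb.ne hki⟩, mul_zero]
  choose D hD using hsingle
  refine ⟨Finset.univ.sup D, eq_top_iff.2 ?_⟩
  rw [← (Pi.basisFun 𝔽 ι).span_eq, Submodule.span_le]
  rintro _ ⟨i, rfl⟩
  rw [Pi.basisFun_apply]
  exact evalImage_mono b (Finset.le_sup (Finset.mem_univ i)) (hD i)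

end SkewPoly

open SkewPoly

theorem stmt12_general {𝔽 : Type*} [DivisionRing 𝔽] {n : ℕ}
    (σ : 𝔽 → Matrix (Fin n) (Fin n) 𝔽) (δ : 𝔽 → Fin n → 𝔽)
    (hσ : IsMatrixMorphism σ) (hδ : IsVectorDerivation σ δ)
    (S : RawMul 𝔽 n) (hS : HasCommRule S σ δ)
    (Ω : Set (Fin n → 𝔽))
    (M : ℕ) (b : Fin M → (Fin n → 𝔽)) (hbinj : Function.Injective b)
    (hB : IsPBasis S (Set.range b) Ω) (v : Fin M → 𝔽) :
    ∃ F : SkewPoly 𝔽 n, deg F < (M : WithBot ℕ) ∧ ∀ i : Fin M, eval S (b i) F = v i := by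
  have hfull : evalImage σ δ b M = ⊤ := by
    simpa using Submodule.eq_top_of_stable (evalImage_mono b)
      (fun _ => evalImage_succ_succ_le hσ hδ hS b) (exists_evalImage_eq_top hσ hδ hS hbinj hB.2.1)
  obtain ⟨F, hF, hFv⟩ : v ∈ evalImage σ δ b M := hfull ▸ Submodule.mem_top
  refine ⟨F, mem_degreeLT.1 hF, fun i => ?_⟩
  rw [eval_eq_linEval hσ hδ hS]
  exact congrFun hFv i

/-- Lagrange interpolation: given a finite P-basis `b₁, …, b_M` of a
finitely generated P-closed set `Ω` and values `a₁, …, a_M`, there is `F` with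
`deg F < M` and `F(bᵢ) = aᵢ` for all `i`. -/
theorem stmt12 {𝔽 : Type*} [DivisionRing 𝔽] {n : ℕ} (hn : 0 < n)
    (σ : 𝔽 → Matrix (Fin n) (Fin n) 𝔽) (δ : 𝔽 → Fin n → 𝔽)
    (hσ : IsMatrixMorphism σ) (hδ : IsVectorDerivation σ δ)
    (S : RawMul 𝔽 n) (hS : HasCommRule S σ δ)
    (Ω : Set (Fin n → 𝔽)) (hΩ : IsPClosed S Ω) (hfg : FinGen S Ω)
    (M : ℕ) (b : Fin M → (Fin n → 𝔽)) (hbinj : Function.Injective b)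
    (hB : IsPBasis S (Set.range b) Ω) (v : Fin M → 𝔽) :
    ∃ F : SkewPoly 𝔽 n, deg F < (M : WithBot ℕ) ∧ ∀ i : Fin M, eval S (b i) F = v i :=
  stmt12_general σ δ hσ hδ S hS Ω M b hbinj hB v
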